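/- arXiv:2305.18162 — 3 statements merged into one kernel-verified Lean document; each statement's English description precedes it below -/
import Mathlib

section
/- Let R > 0, let m ≥ 1 be an integer, and let v : [0,R] → ℝ satisfy Assumption 1.1. Then there exist constants C₀ > 0 and δ₀ > 0 such that for every λ ∈ ℝ and every δ ∈ (0, δ₀] there is a finite family of closed intervals V₁, …, V_N ⊆ [0,R] with E_{λ,δ} ⊆ V₁ ∪ ⋯ ∪ V_N and Σ_{i=1}^N |V_i| < C₀ δ, where |V_i| denotes the length of the interval V_i. -/
/-!
If `|F n| ≥ c` on an interval and each `F (i + 1)` is the derivative of `F i`, the sublevel set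
`{|F 0| < c tⁿ}` is covered by intervals of total length `4 (2ⁿ - 1) t`. Indeed `F (n - 1)` moves at
speed at least `c`, so the set where `|F (n - 1)| < c t` lies within `2 t` of a single point; off
that window `|F (n - 1)| ≥ c t`, and induction applies on the two remaining intervals.

By continuity and compactness, Assumption 1.1 yields finitely many intervals covering `[0, R]`, on
each of which some `|v⁽ᵏ⁾|` with `1 ≤ k ≤ m` is bounded below by a common `c > 0`. As `v` is
`K`-Lipschitz, `E_{λ,δ} ⊆ {|v - λ| < (K + 1) δᵐ}`, and the estimate with `t` proportional to `δ`
gives total length `O(δ)`.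
-/

open MeasureTheory

noncomputable section

/-- Assumption 1.1. -/
def GoodProfile (R : ℝ) (m : ℕ) (v : ℝ → ℝ) : Prop :=
  ContDiffOn ℝ m v (Set.Icc 0 R) ∧
    ∀ r ∈ Set.Icc (0 : ℝ) R, ∑ n ∈ Finset.Icc 1 m, |iteratedDerivWithin n v (Set.Icc 0 R) r| ≠ 0

/-- `E'_{λ,δ}`. -/
def Eset' (R : ℝ) (m : ℕ) (v : ℝ → ℝ) (lam δ : ℝ) : Set ℝ :=
  {r ∈ Set.Icc (0 : ℝ) R | |v r - lam| < δ ^ m}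

/-- `E_{λ,δ}`. -/
def Eset (R : ℝ) (m : ℕ) (v : ℝ → ℝ) (lam δ : ℝ) : Set ℝ :=
  {r ∈ Set.Icc (0 : ℝ) R |
    EMetric.infEdist r (Eset' R m v lam δ) < ENNReal.ofReal (δ ^ m)}

end

open Set Metric

def HasIntervalCover (I S : Set ℝ) (L : ℝ) : Prop :=
  ∃ l : List (ℝ × ℝ), (∀ p ∈ l, p.1 ≤ p.2 ∧ Icc p.1 p.2 ⊆ I) ∧
    S ⊆ ⋃ p ∈ l, Icc p.1 p.2 ∧ (l.map fun p => p.2 - p.1).sum ≤ L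

namespace HasIntervalCover

variable {I J S T : Set ℝ} {L L' : ℝ}

theorem mono (h : HasIntervalCover I T L) (hIJ : I ⊆ J) (hST : S ⊆ T) (hL : L ≤ L') :
    HasIntervalCover J S L' :=
  let ⟨l, hl, hT, hsum⟩ := h
  ⟨l, fun p hp => ⟨(hl p hp).1, (hl p hp).2.trans hIJ⟩, hST.trans hT, hsum.trans hL⟩

theorem of_subset_empty (hS : S ⊆ ∅) (hL : 0 ≤ L) : HasIntervalCover I S L :=
  ⟨[], by simp, by simpa using hS, by simpa using hL⟩

theorem union (hS : HasIntervalCover I S L) (hT : HasIntervalCover I T L') :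
    HasIntervalCover I (S ∪ T) (L + L') := by
  obtain ⟨l, hl, hSl, hsum⟩ := hS
  obtain ⟨l', hl', hTl', hsum'⟩ := hT
  refine ⟨l ++ l', fun p hp => (List.mem_append.1 hp).elim (hl p) (hl' p), ?_, ?_⟩
  · rintro x (hx | hx)
    · obtain ⟨p, hp, hxp⟩ := mem_iUnion₂.1 (hSl hx)
      exact mem_iUnion₂.2 ⟨p, List.mem_append_left _ hp, hxp⟩
    · obtain ⟨p, hp, hxp⟩ := mem_iUnion₂.1 (hTl' hx)
      exact mem_iUnion₂.2 ⟨p, List.mem_append_right _ hp, hxp⟩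
  · simpa using add_le_add hsum hsum'

theorem biUnion {ι : Type*} {t : Finset ι} {S : ι → Set ℝ} {L : ι → ℝ}
    (h : ∀ j ∈ t, HasIntervalCover I (S j) (L j)) :
    HasIntervalCover I (⋃ j ∈ t, S j) (∑ j ∈ t, L j) := by
  classical
  induction t using Finset.induction_on with
  | empty => exact of_subset_empty (by simp) le_rfl
  | insert j t hj ih =>
    rw [Finset.set_biUnion_insert, Finset.sum_insert hj]
    exact (h j (t.mem_insert_self j)).union (ih fun i hi => h i (Finset.mem_insert_of_mem hi))

theorem exists_fin (h : HasIntervalCover I S L) :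
    ∃ (N : ℕ) (a b : Fin N → ℝ), (∀ i, a i ≤ b i) ∧ (∀ i, Icc (a i) (b i) ⊆ I) ∧
      S ⊆ ⋃ i, Icc (a i) (b i) ∧ ∑ i, (b i - a i) ≤ L := by
  obtain ⟨l, hl, hS, hsum⟩ := h
  refine ⟨l.length, fun i => l[i].1, fun i => l[i].2, fun i => (hl _ (l.getElem_mem i.2)).1,
    fun i => (hl _ (l.getElem_mem i.2)).2, ?_, ?_⟩
  · intro x hx
    obtain ⟨p, hp, hxp⟩ := mem_iUnion₂.1 (hS hx)
    obtain ⟨i, hi, rfl⟩ := List.getElem_of_mem hp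
    exact mem_iUnion.2 ⟨⟨i, hi⟩, hxp⟩
  · rwa [← List.ofFn_getElem_eq_map, List.sum_ofFn] at hsum

end HasIntervalCover

theorem hasIntervalCover_Icc {I : Set ℝ} {a b : ℝ} (hab : a ≤ b) (hI : Icc a b ⊆ I) :
    HasIntervalCover I (Icc a b) (b - a) :=
  ⟨[(a, b)], by simpa using ⟨hab, hI⟩, by simp, by simp⟩

theorem hasIntervalCover_Icc_inter_Icc {α β p r : ℝ} (hp : p ∈ Icc α β) (hr : 0 ≤ r) :
    HasIntervalCover (Icc α β) (Icc α β ∩ Icc (p - r) (p + r)) (2 * r) := by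
  rw [Icc_inter_Icc]
  refine (hasIntervalCover_Icc ?_ (Icc_subset_Icc (le_max_left _ _) (min_le_left _ _))).mono
    subset_rfl subset_rfl ?_
  · exact (max_le hp.1 (by linarith)).trans (le_min hp.2 (by linarith))
  · linarith [min_le_right β (p + r), le_max_right α (p - r)]

theorem Convex.mul_sub_le_sub_of_le_hasDerivWithinAt {s : Set ℝ} (hs : Convex ℝ s) {f f' : ℝ → ℝ}
    (hf : ∀ x ∈ s, HasDerivWithinAt f (f' x) s x) {C : ℝ} (hf' : ∀ x ∈ s, C ≤ f' x) :
    ∀ x ∈ s, ∀ y ∈ s, x ≤ y → C * (y - x) ≤ f y - f x := by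
  have hderiv : ∀ x ∈ interior s, HasDerivAt f (f' x) x := fun x hx =>
    (hf x (interior_subset hx)).hasDerivAt (mem_interior_iff_mem_nhds.1 hx)
  exact hs.mul_sub_le_image_sub_of_le_deriv (fun x hx => (hf x hx).continuousWithinAt)
    (fun x hx => (hderiv x hx).differentiableAt.differentiableWithinAt)
    fun x hx => (hderiv x hx).deriv ▸ hf' x (interior_subset hx)

theorem Convex.mul_abs_sub_le_abs_sub_of_le_abs_hasDerivWithinAt {s : Set ℝ} (hs : Convex ℝ s)
    {f f' : ℝ → ℝ} (hf : ∀ x ∈ s, HasDerivWithinAt f (f' x) s x) {c : ℝ} (hc : 0 < c)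
    (hf' : ∀ x ∈ s, c ≤ |f' x|) : ∀ x ∈ s, ∀ y ∈ s, c * |y - x| ≤ |f y - f x| := by
  have of_le : ∀ g g' : ℝ → ℝ, (∀ x ∈ s, HasDerivWithinAt g (g' x) s x) → (∀ x ∈ s, c ≤ g' x) →
      ∀ x ∈ s, ∀ y ∈ s, c * |y - x| ≤ |g y - g x| := by
    intro g g' hg hg' x hx y hy
    have mono := hs.mul_sub_le_sub_of_le_hasDerivWithinAt hg hg'
    rcases le_total x y with hxy | hyx
    · rw [abs_of_nonneg (sub_nonneg.2 hxy)]
      exact (mono x hx y hy hxy).trans (le_abs_self _)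
    · rw [abs_sub_comm, abs_sub_comm (g y), abs_of_nonneg (sub_nonneg.2 hyx)]
      exact (mono y hy x hx hyx).trans (le_abs_self _)
  have hne : ∀ x ∈ s, f' x ≠ 0 := fun x hx h => by
    have := hf' x hx
    rw [h, abs_zero] at this
    linarith
  rcases hasDerivWithinAt_forall_lt_or_forall_gt_of_forall_ne hs hf hne with hneg | hpos
  · intro x hx y hy
    simpa only [Pi.neg_apply, neg_sub_neg, abs_sub_comm (f x)] using
      of_le (-f) (-f') (fun x hx => (hf x hx).neg)
        (fun x hx => (hf' x hx).trans_eq (abs_of_neg (hneg x hx))) x hx y hy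
  · exact of_le f f' hf fun x hx => (hf' x hx).trans_eq (abs_of_pos (hpos x hx))

theorem ContDiffOn.hasDerivWithinAt_iteratedDerivWithin {𝕜 F : Type*} [NontriviallyNormedField 𝕜]
    [NormedAddCommGroup F] [NormedSpace 𝕜 F] {f : 𝕜 → F} {s : Set 𝕜} {n i : ℕ}
    (hf : ContDiffOn 𝕜 n f s) (hs : UniqueDiffOn 𝕜 s) (hi : i < n) {x : 𝕜} (hx : x ∈ s) :
    HasDerivWithinAt (iteratedDerivWithin i f s) (iteratedDerivWithin (i + 1) f s x) s x := by
  rw [iteratedDerivWithin_succ]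
  exact ((hf.differentiableOn_iteratedDerivWithin (by exact_mod_cast hi) hs) x hx).hasDerivWithinAt

theorem IsCompact.exists_finset_le_abs_on_closedBall {X ι : Type*} [PseudoMetricSpace X]
    {K : Set X} (hK : IsCompact K) {s : Set ι} {g : ι → X → ℝ}
    (hg : ∀ i ∈ s, ContinuousOn (g i) K) (hne : ∀ x ∈ K, ∃ i ∈ s, g i x ≠ 0) :
    ∃ c > 0, ∃ (T : Finset X) (ρ : X → ℝ), K ⊆ ⋃ x ∈ T, closedBall x (ρ x) ∧
      ∀ x ∈ T, ∃ i ∈ s, ∀ y ∈ K ∩ closedBall x (ρ x), c ≤ |g i y| := by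
  have hloc : ∀ x ∈ K, ∃ ρ > 0, ∃ c > 0, ∃ i ∈ s, ∀ y ∈ K ∩ closedBall x ρ, c ≤ |g i y| := by
    intro x hx
    obtain ⟨i, hi, hgx⟩ := hne x hx
    have hpos : 0 < |g i x| := abs_pos.2 hgx
    obtain ⟨ε, hε, hball⟩ := mem_nhdsWithin_iff.1
      (((hg i hi) x hx).abs (Ioi_mem_nhds (half_lt_self hpos)))
    exact ⟨ε / 2, half_pos hε, |g i x| / 2, half_pos hpos, i, hi, fun y hy =>
      (hball ⟨closedBall_subset_ball (half_lt_self hε) hy.2, hy.1⟩).le⟩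
  choose! ρ hρ c hc hgc using hloc
  obtain ⟨T, hTK, hKT⟩ :=
    hK.elim_nhds_subcover (fun x => closedBall x (ρ x)) fun x hx => closedBall_mem_nhds x (hρ x hx)
  obtain ⟨c₀, hc₀, hc₀T⟩ : ∃ c₀ > 0, ∀ x ∈ T, c₀ ≤ c x := by
    rcases T.eq_empty_or_nonempty with rfl | hT
    · exact ⟨1, one_pos, by simp⟩
    · exact ⟨T.inf' hT c, (Finset.lt_inf'_iff hT).2 fun x hx => hc x (hTK x hx),
        fun x hx => Finset.inf'_le c hx⟩
  refine ⟨c₀, hc₀, T, ρ, hKT, fun x hx => ?_⟩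
  obtain ⟨i, hi, hgi⟩ := hgc x (hTK x hx)
  exact ⟨i, hi, fun y hy => (hc₀T x hx).trans (hgi y hy)⟩

theorem hasIntervalCover_abs_lt_of_le_abs (n : ℕ) {F : ℕ → ℝ → ℝ} {α β c t ε : ℝ}
    (hF : ∀ i < n, ∀ x ∈ Icc α β, HasDerivWithinAt (F i) (F (i + 1) x) (Icc α β) x)
    (hc : 0 < c) (ht : 0 < t) (hn : ∀ x ∈ Icc α β, c ≤ |F n x|) (hε : ε ≤ c * t ^ n) :
    HasIntervalCover (Icc α β) {x ∈ Icc α β | |F 0 x| < ε} (4 * (2 ^ n - 1) * t) := by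
  induction n generalizing α β c with
  | zero =>
    refine HasIntervalCover.of_subset_empty (fun x hx => ?_) (by simp)
    rw [pow_zero, mul_one] at hε
    exact (hn x hx.1).not_gt (hx.2.trans_le hε)
  | succ n ih =>
    set η := c * t
    have hη : 0 < η := mul_pos hc ht
    have hεη : ε ≤ η * t ^ n := hε.trans_eq (by ring)
    have hF' : ∀ i < n, ∀ x ∈ Icc α β, HasDerivWithinAt (F i) (F (i + 1) x) (Icc α β) x :=
      fun i hi => hF i (by omega)
    have h2 : (1 : ℝ) ≤ 2 ^ n := one_le_pow₀ (by norm_num)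
    by_cases hlarge : ∀ x ∈ Icc α β, η ≤ |F n x|
    · refine (ih hF' hη hlarge hεη).mono subset_rfl subset_rfl ?_
      rw [pow_succ]
      nlinarith
    push Not at hlarge
    obtain ⟨p, hp, hFp⟩ := hlarge
    -- `F n` moves at speed at least `c`, so it stays `η`-small only within `2 t` of `p`.
    have hfar : ∀ x ∈ Icc α β, 2 * t ≤ |x - p| → η ≤ |F n x| := by
      intro x hx hxp
      have := (convex_Icc α β).mul_abs_sub_le_abs_sub_of_le_abs_hasDerivWithinAt
        (hF n n.lt_succ_self) hc hn p hp x hx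
      nlinarith [abs_sub (F n x) (F n p)]
    have hside : ∀ a b, Icc a b ⊆ Icc α β → (∀ x ∈ Icc a b, 2 * t ≤ |x - p|) →
        HasIntervalCover (Icc α β) {x ∈ Icc a b | |F 0 x| < ε} (4 * (2 ^ n - 1) * t) :=
      fun a b hab hab' => (ih (fun i hi x hx => (hF i (by omega) x (hab hx)).mono hab) hη
        (fun x hx => hfar x (hab hx) (hab' x hx)) hεη).mono hab subset_rfl le_rfl
    have hleft := hside α (p - 2 * t) (Icc_subset_Icc le_rfl (by linarith [hp.2]))
      fun x hx => le_abs.2 (Or.inr (by linarith [hx.2]))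
    have hright := hside (p + 2 * t) β (Icc_subset_Icc (by linarith [hp.1]) le_rfl)
      fun x hx => le_abs.2 (Or.inl (by linarith [hx.1]))
    have hmid := hasIntervalCover_Icc_inter_Icc hp (by linarith : 0 ≤ 2 * t)
    refine ((hleft.union hmid).union hright).mono subset_rfl ?_ ?_
    · rintro x ⟨hx, hFx⟩
      by_cases h₁ : x < p - 2 * t
      · exact Or.inl (Or.inl ⟨⟨hx.1, h₁.le⟩, hFx⟩)
      by_cases h₂ : p + 2 * t < x
      · exact Or.inr ⟨⟨h₂.le, hx.2⟩, hFx⟩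
      exact Or.inl (Or.inr ⟨hx, not_lt.1 h₁, not_lt.1 h₂⟩)
    · rw [pow_succ]
      linarith

theorem ContDiffOn.hasIntervalCover_abs_sub_lt {m k : ℕ} {v : ℝ → ℝ} {s : Set ℝ}
    (hv : ContDiffOn ℝ m v s) (hs : UniqueDiffOn ℝ s) {α β : ℝ} (hαβ : Icc α β ⊆ s)
    (hk : k ∈ Finset.Icc 1 m) {c : ℝ} (hc : 0 < c)
    (hbound : ∀ y ∈ Icc α β, c ≤ |iteratedDerivWithin k v s y|) {lam ε t : ℝ} (ht : 0 < t)
    (ht1 : t ≤ 1) (hε : ε ≤ c * t ^ m) :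
    HasIntervalCover (Icc α β) {r ∈ Icc α β | |v r - lam| < ε} (4 * 2 ^ m * t) := by
  obtain ⟨hk1, hkm⟩ := Finset.mem_Icc.1 hk
  have hshift : ContDiffOn ℝ m (fun r => -lam + v r) s := contDiffOn_const.add hv
  refine (hasIntervalCover_abs_lt_of_le_abs k
    (F := fun i => iteratedDerivWithin i (fun r => -lam + v r) s)
    (fun i hi y hy => (hshift.hasDerivWithinAt_iteratedDerivWithin hs (hi.trans_le hkm)
      (hαβ hy)).mono hαβ) hc ht
    (fun y hy => by simpa only [iteratedDerivWithin_const_add hk1] using hbound y hy)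
    (hε.trans (mul_le_mul_of_nonneg_left (pow_le_pow_of_le_one ht.le ht1 hkm) hc.le))).mono
    subset_rfl (fun r hr => ⟨hr.1, by simpa [neg_add_eq_sub] using hr.2⟩) ?_
  have : (2 : ℝ) ^ k ≤ 2 ^ m := pow_le_pow_right₀ (by norm_num) hkm
  nlinarith

theorem GoodProfile.exists_hasIntervalCover {R : ℝ} {m : ℕ} {v : ℝ → ℝ}
    (hv : GoodProfile R m v) (hR : 0 < R) :
    ∃ c > 0, ∃ N : ℕ, ∀ lam ε t : ℝ, 0 < t → t ≤ 1 → ε ≤ c * t ^ m →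
      HasIntervalCover (Icc 0 R) {r ∈ Icc 0 R | |v r - lam| < ε} (N * (4 * 2 ^ m * t)) := by
  obtain ⟨hCD, hnz⟩ := hv
  have hs := uniqueDiffOn_Icc hR
  obtain ⟨c, hc, T, ρ, hcover, hT⟩ := isCompact_Icc.exists_finset_le_abs_on_closedBall
    (s := ↑(Finset.Icc 1 m)) (g := fun k => iteratedDerivWithin k v (Icc 0 R))
    (fun k hk => hCD.continuousOn_iteratedDerivWithin (mod_cast (Finset.mem_Icc.1 hk).2) hs)
    fun x hx => by
      obtain ⟨k, hk, h⟩ := Finset.exists_ne_zero_of_sum_ne_zero (hnz x hx)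
      exact ⟨k, hk, abs_ne_zero.1 h⟩
  refine ⟨c, hc, T.card, fun lam ε t ht ht1 hε => ?_⟩
  have hpiece : ∀ x ∈ T, HasIntervalCover (Icc 0 R)
      {r ∈ Icc 0 R ∩ closedBall x (ρ x) | |v r - lam| < ε} (4 * 2 ^ m * t) := by
    intro x hx
    obtain ⟨k, hk, hbound⟩ := hT x hx
    rw [Real.closedBall_eq_Icc, Icc_inter_Icc] at hbound ⊢
    have hsub := Icc_subset_Icc (le_max_left 0 (x - ρ x)) (min_le_left R (x + ρ x))
    exact (hCD.hasIntervalCover_abs_sub_lt hs hsub hk hc hbound ht ht1 hε).mono hsub subset_rfl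
      le_rfl
  refine (HasIntervalCover.biUnion hpiece).mono subset_rfl ?_ (by simp)
  rintro r ⟨hr, hvr⟩
  obtain ⟨x, hx, hrx⟩ := mem_iUnion₂.1 (hcover hr)
  exact mem_iUnion₂.2 ⟨x, hx, ⟨hr, hrx⟩, hvr⟩

theorem Eset_subset_abs_sub_lt {R : ℝ} {m : ℕ} {v : ℝ → ℝ} {K : NNReal}
    (hv : LipschitzOnWith K v (Icc 0 R)) (lam δ : ℝ) :
    Eset R m v lam δ ⊆ {r ∈ Icc 0 R | |v r - lam| < (K + 1) * δ ^ m} := by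
  rintro r ⟨hr, hrE⟩
  obtain ⟨r', ⟨hr', hvr'⟩, hrr'⟩ := Metric.infEDist_lt_iff.1 hrE
  rw [edist_lt_ofReal] at hrr'
  refine ⟨hr, ?_⟩
  calc |v r - lam| ≤ |v r - v r'| + |v r' - lam| := abs_sub_le _ _ _
    _ < K * δ ^ m + δ ^ m :=
      add_lt_add_of_le_of_lt ((hv.dist_le_mul r hr r' hr').trans
        (mul_le_mul_of_nonneg_left hrr'.le K.coe_nonneg)) hvr'
    _ = (K + 1) * δ ^ m := by ring

/-- Lemma 2.5: `E_{λ,δ}` is covered by finitely many intervals of total length `O(δ)`. -/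
theorem covering_lemma
    (R : ℝ) (hR : 0 < R) (m : ℕ) (hm : 1 ≤ m) (v : ℝ → ℝ) (hv : GoodProfile R m v) :
    ∃ C₀ δ₀ : ℝ, 0 < C₀ ∧ 0 < δ₀ ∧
      ∀ lam : ℝ, ∀ δ ∈ Set.Ioc (0 : ℝ) δ₀,
        ∃ (N : ℕ) (a b : Fin N → ℝ),
          (∀ i, a i ≤ b i) ∧
          (∀ i, Set.Icc (a i) (b i) ⊆ Set.Icc (0 : ℝ) R) ∧
          (Eset R m v lam δ ⊆ ⋃ i, Set.Icc (a i) (b i)) ∧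
          (∑ i, (b i - a i)) < C₀ * δ := by
  obtain ⟨c, hc, N, hcover⟩ := hv.exists_hasIntervalCover hR
  obtain ⟨K, hK⟩ := hv.1.exists_lipschitzOnWith (mod_cast (by omega : m ≠ 0)) (convex_Icc 0 R)
    isCompact_Icc
  set A := max 1 ((K + 1) / c)
  have hA : 1 ≤ A := le_max_left _ _
  refine ⟨N * (4 * 2 ^ m * A) + 1, A⁻¹, by positivity, by positivity, fun lam δ ⟨hδ, hδA⟩ => ?_⟩
  have ht1 : A * δ ≤ 1 :=
    (mul_le_mul_of_nonneg_left hδA (by positivity)).trans_eq (mul_inv_cancel₀ (by positivity))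
  have hε : (K + 1) * δ ^ m ≤ c * (A * δ) ^ m := calc
    (K + 1) * δ ^ m ≤ c * A * δ ^ m := by
      gcongr
      exact (div_le_iff₀' hc).1 (le_max_right _ _)
    _ ≤ c * A ^ m * δ ^ m := by gcongr; exact le_self_pow₀ hA (by omega)
    _ = c * (A * δ) ^ m := by ring
  obtain ⟨n, a, b, hab, hsub, hE, hsum⟩ := ((hcover lam _ (A * δ) (by positivity) ht1 hε).mono
    subset_rfl (Eset_subset_abs_sub_lt hK lam δ) le_rfl).exists_fin
  exact ⟨n, a, b, hab, hsub, hE, hsum.trans_lt (by nlinarith)⟩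
end

section
/- For every integer m ≥ 1 and every c > 0 there exists a constant C > 0 such that for all ν > 0 and t > 0 with ν t ≥ 1, one has ∫_{{k ∈ ℝ : |k| > ν}} e^{−c ν^{m/(m+2)} |k|^{2/(m+2)} t} dk ≤ C t^{−1} e^{−c ν t / 2}. -/
open MeasureTheory Real

/-! For `|k| > ν` the exponent `ν ^ α * |k| ^ β` (with `α = m/(m+2)`, `β = 2/(m+2)`, `α + β = 1`)
is at least `ν`, so half of it already yields the factor `e^{-cνt/2}`. The other half is integrated
over all of `ℝ` as a Gamma integral, `∫ e^{-A|k|^β} = 2 Γ(1/β + 1) A^{-1/β}` with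
`A = (c/2) ν^α t`, and `A^{-1/β} = (c/2)^{-1/β} (νt)^{-α/β} t⁻¹ ≤ (c/2)^{-1/β} t⁻¹` since `νt ≥ 1`. -/

theorem integral_exp_neg_mul_abs_rpow {b p : ℝ} (hp : 0 < p) (hb : 0 < b) :
    ∫ x, exp (-(b * |x| ^ p)) = 2 * (b ^ (-1 / p) * Gamma (1 / p + 1)) := by
  rw [integral_comp_abs (f := fun x => exp (-(b * x ^ p))), ← integral_exp_neg_mul_rpow hp hb]
  simp only [neg_mul]

theorem integrable_exp_neg_mul_abs_rpow {b p : ℝ} (hp : 0 < p) (hb : 0 < b) :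
    Integrable fun x : ℝ => exp (-(b * |x| ^ p)) := by
  refine .of_integral_ne_zero ?_
  rw [integral_exp_neg_mul_abs_rpow hp hb]
  have hΓ := Gamma_pos_of_pos (by positivity : 0 < 1 / p + 1)
  positivity

theorem setIntegral_le_integral_of_le {X : Type*} [MeasurableSpace X] {μ : Measure X}
    {f g : X → ℝ} {s : Set X} (hs : MeasurableSet s) (hg : Integrable g μ) (hg0 : 0 ≤ g)
    (hf0 : ∀ x ∈ s, 0 ≤ f x) (hfg : ∀ x ∈ s, f x ≤ g x) :
    ∫ x in s, f x ∂μ ≤ ∫ x, g x ∂μ :=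
  calc ∫ x in s, f x ∂μ ≤ ∫ x in s, g x ∂μ :=
        integral_mono_of_nonneg (ae_restrict_of_forall_mem hs hf0) hg.integrableOn
          (ae_restrict_of_forall_mem hs hfg)
    _ ≤ ∫ x, g x ∂μ := setIntegral_le_integral hg (.of_forall hg0)

theorem le_rpow_mul_rpow_of_le {ν x α β : ℝ} (hν : 0 < ν) (hx : ν ≤ x) (hβ : 0 ≤ β)
    (hαβ : α + β = 1) : ν ≤ ν ^ α * x ^ β :=
  calc ν = ν ^ α * ν ^ β := by rw [← rpow_add hν, hαβ, rpow_one]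
    _ ≤ ν ^ α * x ^ β := by gcongr

theorem rpow_neg_one_div_le_of_one_le_mul {a ν t α β : ℝ} (ha : 0 < a) (hν : 0 < ν)
    (ht : 0 < t) (hνt : 1 ≤ ν * t) (hα : 0 ≤ α) (hβ : 0 < β) (hαβ : α + β = 1) :
    (a * ν ^ α * t) ^ (-1 / β) ≤ a ^ (-1 / β) * t⁻¹ := by
  have hexp : -1 / β = -(α / β) + -1 := by field_simp; linarith
  have hsplit : (a * ν ^ α * t) ^ (-1 / β) = a ^ (-1 / β) * ((ν * t) ^ (-(α / β)) * t⁻¹) := by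
    rw [mul_rpow (by positivity) ht.le, mul_rpow ha.le (by positivity), ← rpow_mul hν.le,
      mul_rpow hν.le ht.le, show t ^ (-1 / β) = t ^ (-(α / β)) * t⁻¹ by
        rw [hexp, rpow_add ht, rpow_neg_one], show α * (-1 / β) = -(α / β) by ring]
    ring
  rw [hsplit]
  gcongr
  exact mul_le_of_le_one_left (by positivity)
    (rpow_le_one_of_one_le_of_nonpos hνt (neg_nonpos.mpr (div_nonneg hα hβ.le)))

theorem high_frequency_integral_general (m : ℕ) (c : ℝ) (hc : 0 < c) :
    ∃ C : ℝ, 0 < C ∧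
      ∀ ν t : ℝ, 0 < ν → 0 < t → 1 ≤ ν * t →
        (∫ k in {k : ℝ | ν < |k|},
            Real.exp (-(c * ν ^ ((m : ℝ) / (m + 2)) * |k| ^ ((2 : ℝ) / (m + 2)) * t))) ≤
          C * t⁻¹ * Real.exp (-(c * ν * t / 2)) := by
  set α : ℝ := m / (m + 2)
  set β : ℝ := 2 / (m + 2)
  have hβ : 0 < β := by positivity
  have hαβ : α + β = 1 := by rw [← add_div, div_self (by positivity)]
  have hΓ := Gamma_pos_of_pos (by positivity : 0 < 1 / β + 1)
  refine ⟨2 * ((c / 2) ^ (-1 / β) * Gamma (1 / β + 1)), by positivity,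
    fun ν t hν ht hνt => ?_⟩
  set A := c / 2 * ν ^ α * t with hA_def
  have hA : 0 < A := by positivity
  have hpointwise : ∀ k ∈ {k : ℝ | ν < |k|}, exp (-(c * ν ^ α * |k| ^ β * t)) ≤
      exp (-(c * ν * t / 2)) * exp (-(A * |k| ^ β)) := fun k hk => by
    have hν_le := le_rpow_mul_rpow_of_le hν (le_of_lt hk) hβ.le hαβ
    rw [← exp_add, exp_le_exp, hA_def]
    linarith [mul_le_mul_of_nonneg_left hν_le (by positivity : 0 ≤ c * t / 2)]
  calc _ ≤ ∫ k, exp (-(c * ν * t / 2)) * exp (-(A * |k| ^ β)) :=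
        setIntegral_le_integral_of_le (measurableSet_lt measurable_const measurable_abs)
          ((integrable_exp_neg_mul_abs_rpow hβ hA).const_mul _) (fun _ => by positivity)
          (fun _ _ => by positivity) hpointwise
    _ = 2 * (A ^ (-1 / β) * Gamma (1 / β + 1)) * exp (-(c * ν * t / 2)) := by
        rw [integral_const_mul, integral_exp_neg_mul_abs_rpow hβ hA, mul_comm]
    _ ≤ 2 * ((c / 2) ^ (-1 / β) * t⁻¹ * Gamma (1 / β + 1)) * exp (-(c * ν * t / 2)) := by
        gcongr
        exact rpow_neg_one_div_le_of_one_le_mul (by positivity) hν ht hνt (by positivity) hβ hαβ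
    _ = _ := by ring

/-- The high-frequency integral estimate (3.4)--(3.6):
`∫_{|k| > ν} e^{-c ν^{m/(m+2)} |k|^{2/(m+2)} t} dk ≤ C t⁻¹ e^{-c ν t / 2}`. -/
theorem high_frequency_integral (m : ℕ) (hm : 1 ≤ m) (c : ℝ) (hc : 0 < c) :
    ∃ C : ℝ, 0 < C ∧
      ∀ ν t : ℝ, 0 < ν → 0 < t → 1 ≤ ν * t →
        (∫ k in {k : ℝ | ν < |k|},
            Real.exp (-(c * ν ^ ((m : ℝ) / (m + 2)) * |k| ^ ((2 : ℝ) / (m + 2)) * t))) ≤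
          C * t⁻¹ * Real.exp (-(c * ν * t / 2)) :=
  high_frequency_integral_general m c hc
end

section
/- Let R > 0, let m ≥ 1 be an integer, and let v : [0,R] → ℝ satisfy Assumption 1.1. Then for every λ ∈ ℝ, the level set E_λ = { r ∈ [0,R] : v(r) = λ } is finite. -/
open Topology Filter Set

theorem ContinuousWithinAt.eq_of_frequently_eq {X Y : Type*} [TopologicalSpace X]
    [TopologicalSpace Y] [T1Space Y] {f : X → Y} {s : Set X} {x : X} {c : Y}
    (hf : ContinuousWithinAt f s x) (h : ∃ᶠ y in 𝓝[≠] x, y ∈ s ∧ f y = c) : f x = c := by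
  have hs : ∃ᶠ y in 𝓝[s] x, f y = c :=
    frequently_nhdsWithin_iff.2 <| (h.filter_mono nhdsWithin_le_nhds).mono fun _ hy => ⟨hy.2, hy.1⟩
  exact (hf.frequently hs).mem_of_closed isClosed_singleton

section Rolle

variable {s : Set ℝ} {f : ℝ → ℝ}

theorem Set.OrdConnected.exists_mem_Ioo_derivWithin_eq_zero (hs : s.OrdConnected)
    (hf : ContinuousOn f s) {p q : ℝ} (hp : p ∈ s) (hq : q ∈ s) (hpq : p < q) (hfpq : f p = f q) :
    ∃ z ∈ Ioo p q, derivWithin f s z = 0 := by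
  obtain ⟨z, hz, hz0⟩ := exists_deriv_eq_zero hpq (hf.mono (hs.out hp hq)) hfpq
  have hsz : s ∈ 𝓝 z :=
    mem_of_superset (isOpen_Ioo.mem_nhds hz) (Ioo_subset_Icc_self.trans (hs.out hp hq))
  exact ⟨z, hz, by rw [derivWithin_of_mem_nhds hsz, hz0]⟩

theorem Set.OrdConnected.frequently_derivWithin_eq_zero (hs : s.OrdConnected)
    (hf : ContinuousOn f s) {x : ℝ} (hx : x ∈ s) (h : ∃ᶠ y in 𝓝[≠] x, y ∈ s ∧ f y = f x) :
    ∃ᶠ y in 𝓝[≠] x, y ∈ s ∧ derivWithin f s y = 0 := by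
  rw [(nhdsWithin_hasBasis Metric.nhds_basis_ball _).frequently_iff] at h ⊢
  intro ε hε
  obtain ⟨y, ⟨hyε, hyx⟩, hys, hfy⟩ := h ε hε
  -- the Rolle point lies between `x` and `y`, hence in `s ∩ ball x ε`
  have hconn := (hs.inter (convex_ball x ε).ordConnected).out
  have hxε := Metric.mem_ball_self (x := x) hε
  rcases lt_or_gt_of_ne hyx with hlt | hlt
  · obtain ⟨z, hz, hz0⟩ := hs.exists_mem_Ioo_derivWithin_eq_zero hf hys hx hlt hfy
    have hzs := hconn ⟨hys, hyε⟩ ⟨hx, hxε⟩ (Ioo_subset_Icc_self hz)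
    exact ⟨z, ⟨hzs.2, hz.2.ne⟩, hzs.1, hz0⟩
  · obtain ⟨z, hz, hz0⟩ := hs.exists_mem_Ioo_derivWithin_eq_zero hf hx hys hlt hfy.symm
    have hzs := hconn ⟨hx, hxε⟩ ⟨hys, hyε⟩ (Ioo_subset_Icc_self hz)
    exact ⟨z, ⟨hzs.2, hz.1.ne'⟩, hzs.1, hz0⟩

end Rolle

section IteratedDerivatives

variable {s : Set ℝ} {v : ℝ → ℝ} {m : ℕ} {x : ℝ}

theorem frequently_iteratedDerivWithin_succ_eq_zero (hs : s.OrdConnected)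
    (hsu : UniqueDiffOn ℝ s) (hv : ContDiffOn ℝ m v s) (hx : x ∈ s) {k : ℕ} (hk : k < m)
    (h : ∃ᶠ y in 𝓝[≠] x, y ∈ s ∧ iteratedDerivWithin k v s y = iteratedDerivWithin k v s x) :
    ∃ᶠ y in 𝓝[≠] x, y ∈ s ∧ iteratedDerivWithin (k + 1) v s y = 0 := by
  rw [iteratedDerivWithin_succ]
  exact hs.frequently_derivWithin_eq_zero
    (hv.continuousOn_iteratedDerivWithin (by exact_mod_cast hk.le) hsu) hx h

theorem frequently_iteratedDerivWithin_eq (hs : s.OrdConnected) (hsu : UniqueDiffOn ℝ s)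
    (hv : ContDiffOn ℝ m v s) (hx : x ∈ s) (h : ∃ᶠ y in 𝓝[≠] x, y ∈ s ∧ v y = v x) :
    ∀ n ≤ m, ∃ᶠ y in 𝓝[≠] x, y ∈ s ∧ iteratedDerivWithin n v s y = iteratedDerivWithin n v s x
  | 0, _ => by simpa only [iteratedDerivWithin_zero] using h
  | k + 1, hk => by
    have hzero := frequently_iteratedDerivWithin_succ_eq_zero hs hsu hv hx hk
      (frequently_iteratedDerivWithin_eq hs hsu hv hx h k (Nat.le_of_succ_le hk))
    have hx0 : iteratedDerivWithin (k + 1) v s x = 0 :=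
      ((hv.continuousOn_iteratedDerivWithin (by exact_mod_cast hk) hsu) x hx).eq_of_frequently_eq
        hzero
    rwa [hx0]

theorem iteratedDerivWithin_eq_zero_of_frequently_eq (hs : s.OrdConnected)
    (hsu : UniqueDiffOn ℝ s) (hv : ContDiffOn ℝ m v s) (hx : x ∈ s)
    (h : ∃ᶠ y in 𝓝[≠] x, y ∈ s ∧ v y = v x) {n : ℕ} (hn₁ : 1 ≤ n) (hnm : n ≤ m) :
    iteratedDerivWithin n v s x = 0 := by
  obtain ⟨k, rfl⟩ := Nat.exists_eq_add_of_le' hn₁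
  have hcont := hv.continuousOn_iteratedDerivWithin (by exact_mod_cast hnm) hsu x hx
  exact hcont.eq_of_frequently_eq <| frequently_iteratedDerivWithin_succ_eq_zero hs hsu hv hx hnm
    (frequently_iteratedDerivWithin_eq hs hsu hv hx h k (Nat.le_of_succ_le hnm))

end IteratedDerivatives

theorem level_set_finite_general
    (R : ℝ) (hR : 0 < R) (m : ℕ) (v : ℝ → ℝ) (hv : GoodProfile R m v)
    (lam : ℝ) :
    {r ∈ Set.Icc (0 : ℝ) R | v r = lam}.Finite := by
  by_contra hinf
  obtain ⟨r, hr, hacc⟩ :=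
    Set.Infinite.exists_accPt_of_subset_isCompact hinf isCompact_Icc fun _ h => h.1
  rw [accPt_iff_frequently_nhdsNE] at hacc
  obtain rfl : v r = lam := (hv.1.continuousOn r hr).eq_of_frequently_eq hacc
  refine hv.2 r hr (Finset.sum_eq_zero fun n hn => ?_)
  rw [Finset.mem_Icc] at hn
  exact abs_eq_zero.2 <| iteratedDerivWithin_eq_zero_of_frequently_eq ordConnected_Icc
    (uniqueDiffOn_Icc hR) hv.1 hr hacc hn.1 hn.2

/-- Under Assumption 1.1, every level set `E_λ = v⁻¹(λ) ∩ [0,R]` is finite. -/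
theorem level_set_finite
    (R : ℝ) (hR : 0 < R) (m : ℕ) (hm : 1 ≤ m) (v : ℝ → ℝ) (hv : GoodProfile R m v)
    (lam : ℝ) :
    {r ∈ Set.Icc (0 : ℝ) R | v r = lam}.Finite :=
  level_set_finite_general R hR m v hv lam
end
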